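/- Let p be a prime. Then every subset A of F_p \ {0} of size at most log p / log log p has a valid ordering, i.e., an ordering a_1,...,a_{|A|} of its elements such that the partial sums a_1, a_1+a_2, ..., a_1+...+a_{|A|} are pairwise distinct in F_p. -/

import Mathlib

/-!
Sets of at most four nonzero elements can be ordered by hand, in any abelian group. For
`k = |A| ≥ 5` the size bound forces `k ^ k < p`, and Dirichlet's box principle then gives a
dilation `c ≠ 0` of `F_p` such that every `c * a` with `a ∈ A` lifts to an integer `d a` with
`k * |d a| < p`. Nonzero integers always admit a valid ordering: when their sum is positive one
can even keep every partial sum positive, by induction, prepending a positive element and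
reversing an ordering of the negated rest when the rest has negative sum. Since
`∑ |d a| < p`, distinct integer partial sums stay distinct modulo `p`.
-/

/-- The partial sums a₁, a₁+a₂, ..., a₁+⋯+aₙ of the list are pairwise distinct. -/
def ValidOrdering {G : Type*} [AddCommGroup G] (l : List G) : Prop :=
  ((List.range l.length).map (fun i => (l.take (i + 1)).sum)).Nodup

/-- `l` is an ordering (an enumeration without repetition) of the finite set `A`. -/
def IsOrderingOf {G : Type*} [AddCommGroup G] (l : List G) (A : Finset G) : Prop :=
  l.Nodup ∧ ∀ a, a ∈ l ↔ a ∈ A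

section PartialSums

variable {G H : Type*} [AddCommGroup G] [AddCommGroup H]

theorem List.partialSums_map (f : G →+ H) (l : List G) :
    (l.map f).partialSums = l.partialSums.map f := by
  induction l with
  | nil => simp
  | cons a l ih => simp [List.partialSums_cons, ih, Function.comp_def]

theorem List.partialSums_reverse (l : List G) :
    l.reverse.partialSums = (l.partialSums.map (l.sum - ·)).reverse := by
  induction l with
  | nil => simp
  | cons a l ih =>
    simp [List.partialSums_append, ih, List.partialSums_cons, Function.comp_def]
    abel

theorem List.partialSums_map_neg (l : List G) :
    (l.map Neg.neg).partialSums = l.partialSums.map Neg.neg := by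
  simpa using l.partialSums_map negAddMonoidHom

theorem validOrdering_iff_nodup_tail_partialSums (l : List G) :
    ValidOrdering l ↔ l.partialSums.tail.Nodup := by
  have : (List.range l.length).map (fun i => (l.take (i + 1)).sum) = l.partialSums.tail :=
    List.ext_getElem (by simp) (by simp)
  rw [ValidOrdering, this]

theorem validOrdering_cons_iff (x : G) (l : List G) :
    ValidOrdering (x :: l) ↔ l.partialSums.Nodup := by
  rw [validOrdering_iff_nodup_tail_partialSums, List.partialSums_cons, List.tail_cons,
    List.nodup_map_iff (add_right_injective x)]

theorem ValidOrdering.map_of_injOn {l : List G} (hl : ValidOrdering l) (f : G →+ H)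
    (hf : Set.InjOn f {s | s ∈ l.partialSums}) : ValidOrdering (l.map f) := by
  rw [validOrdering_iff_nodup_tail_partialSums] at hl ⊢
  rw [List.partialSums_map, ← List.map_tail]
  exact hl.map_on fun x hx y hy => hf (List.mem_of_mem_tail hx) (List.mem_of_mem_tail hy)

end PartialSums

section Orderings

variable {G H : Type*} [AddCommGroup G] [AddCommGroup H] {l : List G} {S : Finset G}

theorem IsOrderingOf.cons [DecidableEq G] {a : G} (h : IsOrderingOf l (S.erase a)) (ha : a ∈ S) :
    IsOrderingOf (a :: l) S := by
  refine ⟨List.nodup_cons.2 ⟨fun hal => ?_, h.1⟩, fun b => ?_⟩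
  · simpa using (h.2 a).1 hal
  · rw [List.mem_cons, h.2]
    by_cases hb : b = a <;> simp [hb, ha]

theorem IsOrderingOf.reverse (h : IsOrderingOf l S) : IsOrderingOf l.reverse S :=
  ⟨List.nodup_reverse.2 h.1, fun a => List.mem_reverse.trans (h.2 a)⟩

theorem IsOrderingOf.map [DecidableEq H] (h : IsOrderingOf l S) {f : G → H} (hf : Set.InjOn f S) :
    IsOrderingOf (l.map f) (S.image f) :=
  ⟨h.1.map_on fun x hx y hy => hf ((h.2 x).1 hx) ((h.2 y).1 hy), fun b => by simp [h.2]⟩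

theorem IsOrderingOf.map_neg [DecidableEq G] (h : IsOrderingOf l (S.image Neg.neg)) :
    IsOrderingOf (l.map Neg.neg) S := by
  simpa [Finset.image_image, Function.comp_def] using h.map neg_injective.injOn

theorem IsOrderingOf.sum_map [DecidableEq G] {M : Type*} [AddCommMonoid M] (h : IsOrderingOf l S)
    (g : G → M) :
    (l.map g).sum = ∑ a ∈ S, g a := by
  rw [← List.sum_toFinset g h.1]
  congr 1
  ext a
  simp [h.2]

theorem isOrderingOf_of_perm_toList (h : l.Perm S.toList) : IsOrderingOf l S :=
  ⟨h.nodup_iff.2 S.nodup_toList, fun _ => h.mem_iff.trans Finset.mem_toList⟩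

end Orderings

section SmallSets

variable {G : Type*} [AddCommGroup G]

theorem exists_perm_nodup_partialSums_of_length_le_three {l : List G} (hl : l.Nodup)
    (h0 : (0 : G) ∉ l) (hsum : l.sum ≠ 0) (hlen : l.length ≤ 3) :
    ∃ t : List G, t.Perm l ∧ t.partialSums.Nodup := by
  match l, hlen with
  | [], _ => simp at hsum
  | [u], _ => exact ⟨[u], .refl _, by simpa [List.partialSums_cons, eq_comm] using h0⟩
  | [u, v], _ =>
    refine ⟨[u, v], .refl _, ?_⟩
    simp_all [List.partialSums_cons, eq_comm (a := (0 : G))]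
  | [u, v, w], _ =>
    obtain ⟨⟨huv, huw⟩, hvw⟩ : (u ≠ v ∧ u ≠ w) ∧ v ≠ w := by simpa using hl
    simp only [List.mem_cons, not_or] at h0
    -- at most one of the pairs sums to zero, and that pair goes to the two ends
    by_cases huv0 : u + v = 0
    · refine ⟨[u, w, v], (List.Perm.swap v w []).cons u, ?_⟩
      have huw0 : u + w ≠ 0 := fun h => hvw (add_left_cancel (huv0.trans h.symm))
      have hwv0 : w + v ≠ 0 := fun h => huw (add_right_cancel (huv0.trans h.symm))
      simp_all [List.partialSums_cons, eq_comm (a := (0 : G)), add_comm w v]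
    by_cases hvw0 : v + w = 0
    · refine ⟨[v, u, w], List.Perm.swap u v [w], ?_⟩
      have hvu0 : v + u ≠ 0 := fun h => huw (add_left_cancel (h.trans hvw0.symm))
      have huw0 : u + w ≠ 0 := fun h => huv (add_right_cancel (h.trans hvw0.symm))
      have hvuw0 : v + (u + w) ≠ 0 := by rw [add_left_comm]; simpa using hsum
      clear hsum
      simp_all [List.partialSums_cons, eq_comm (a := (0 : G))]
    · refine ⟨[u, v, w], .refl _, ?_⟩
      simp_all [List.partialSums_cons, eq_comm (a := (0 : G))]

theorem exists_perm_validOrdering_of_length_le_four {l : List G} (hl : l.Nodup)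
    (h0 : (0 : G) ∉ l) (hlen : l.length ≤ 4) :
    ∃ t : List G, t.Perm l ∧ ValidOrdering t := by
  match l with
  | [] => exact ⟨[], .refl _, by simp [ValidOrdering]⟩
  | [a] => exact ⟨[a], .refl _, by simp [ValidOrdering]⟩
  | a :: b :: r =>
    simp only [List.nodup_cons, List.mem_cons, not_or] at hl h0
    by_cases hsum : (b :: r).sum = 0
    · have hsum' : (a :: r).sum ≠ 0 := by
        intro h
        simp only [List.sum_cons] at h hsum
        exact hl.1.1 (add_right_cancel (h.trans hsum.symm))
      obtain ⟨t, ht, hnodup⟩ := exists_perm_nodup_partialSums_of_length_le_three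
        (l := a :: r) (by simp [hl]) (by simp [h0]) hsum' (by simp at hlen ⊢; omega)
      exact ⟨b :: t, (ht.cons b).trans (.swap a b r), (validOrdering_cons_iff b t).2 hnodup⟩
    · obtain ⟨t, ht, hnodup⟩ := exists_perm_nodup_partialSums_of_length_le_three
        (l := b :: r) (by simp [hl]) (by simp [h0]) hsum (by simp at hlen ⊢; omega)
      exact ⟨a :: t, ht.cons a, (validOrdering_cons_iff a t).2 hnodup⟩

theorem exists_isOrderingOf_validOrdering_of_card_le_four [DecidableEq G] (A : Finset G) (h0 : (0 : G) ∉ A)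
    (hcard : A.card ≤ 4) : ∃ l, IsOrderingOf l A ∧ ValidOrdering l := by
  obtain ⟨l, hl, hvalid⟩ := exists_perm_validOrdering_of_length_le_four A.nodup_toList
    (by simpa using h0) (by simpa using hcard)
  exact ⟨l, isOrderingOf_of_perm_toList hl, hvalid⟩

end SmallSets

section Integers

open Finset

theorem exists_pos_ne_sum_of_ne_singleton {S : Finset ℤ} (h0 : (0 : ℤ) ∉ S)
    (hpos : 0 < ∑ x ∈ S, x) (hS : S ≠ {∑ x ∈ S, x}) :
    ∃ b ∈ S, 0 < b ∧ b ≠ ∑ x ∈ S, x := by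
  set T := ∑ x ∈ S, x
  by_contra! h
  have hneg : ∀ x ∈ S, x ≠ T → x < 0 := fun x hx hxT =>
    lt_of_le_of_ne (not_lt.1 (hxT ∘ h x hx)) (ne_of_mem_of_not_mem hx h0)
  have hT : T ∈ S := by
    by_contra hT
    have := Finset.sum_neg (fun x hx => hneg x hx (ne_of_mem_of_not_mem hx hT))
      (nonempty_of_sum_ne_zero hpos.ne')
    exact absurd hpos this.not_gt
  obtain ⟨y, hy, hyT⟩ : ∃ y ∈ S, y ≠ T := by
    by_contra! hall
    exact hS (eq_singleton_iff_unique_mem.2 ⟨hT, hall⟩)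
  have := Finset.sum_neg (fun x hx => hneg x (mem_of_mem_erase hx) (ne_of_mem_erase hx))
    ⟨y, mem_erase.2 ⟨hyT, hy⟩⟩
  rw [sum_erase_eq_sub hT, sub_self] at this
  exact this.false

theorem exists_isOrderingOf_partialSums_nonneg (S : Finset ℤ) (h0 : (0 : ℤ) ∉ S)
    (hpos : 0 < ∑ x ∈ S, x) :
    ∃ l, IsOrderingOf l S ∧ l.partialSums.Nodup ∧ ∀ s ∈ l.partialSums, 0 ≤ s := by
  set T := ∑ x ∈ S, x
  by_cases hS : S = {T}
  · refine ⟨[T], ⟨by simp, by simp [hS]⟩, ?_, ?_⟩ <;>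
      simp [List.partialSums_cons, hpos.ne, hpos.le]
  obtain ⟨b, hb, hb0, hbT⟩ := exists_pos_ne_sum_of_ne_singleton h0 hpos hS
  have h0' : (0 : ℤ) ∉ S.erase b := fun h => h0 (mem_of_mem_erase h)
  have hT' : ∑ x ∈ S.erase b, x = T - b := sum_erase_eq_sub hb
  suffices ∃ w, IsOrderingOf w (S.erase b) ∧ w.partialSums.Nodup ∧
      ∀ s ∈ w.partialSums, 0 < b + s by
    obtain ⟨w, hw, hnodup, hwpos⟩ := this
    refine ⟨b :: w, hw.cons hb, ?_, ?_⟩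
    · rw [List.partialSums_cons, List.nodup_cons, List.nodup_map_iff (add_right_injective b)]
      simp only [List.mem_map, not_exists, not_and]
      exact ⟨fun s hs h => (hwpos s hs).ne' h, hnodup⟩
    · simp only [List.partialSums_cons, List.mem_cons, List.mem_map]
      rintro _ (rfl | ⟨s, hs, rfl⟩)
      exacts [le_rfl, (hwpos s hs).le]
  rcases (sub_ne_zero.2 hbT.symm).lt_or_gt with hneg | hpos'
  · -- reversing an ordering of the negated rest makes every partial sum at least `T - b`
    have hpos'' : 0 < ∑ x ∈ (S.erase b).image Neg.neg, x := by
      rw [sum_image (fun x _ y _ h => neg_injective h), sum_neg_distrib, hT']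
      linarith
    obtain ⟨u, hu, hnodup, hnonneg⟩ := exists_isOrderingOf_partialSums_nonneg
      ((S.erase b).image Neg.neg) (by simpa using h0') hpos''
    have hv : IsOrderingOf (u.map Neg.neg) (S.erase b) := hu.map_neg
    have hvsum : (u.map Neg.neg).sum = T - b := by simpa [hT'] using hv.sum_map id
    have hps : (u.map Neg.neg).reverse.partialSums = (u.partialSums.map (T - b + ·)).reverse := by
      simp [List.partialSums_reverse, List.partialSums_map_neg, hvsum, Function.comp_def,
        sub_eq_add_neg]
    refine ⟨(u.map Neg.neg).reverse, hv.reverse, ?_, ?_⟩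
    · rw [hps, List.nodup_reverse]
      exact hnodup.map (add_right_injective _)
    · simp only [hps, List.mem_reverse, List.mem_map]
      rintro _ ⟨s, hs, rfl⟩
      linarith [hnonneg s hs]
  · obtain ⟨w, hw, hnodup, hnonneg⟩ := exists_isOrderingOf_partialSums_nonneg (S.erase b) h0'
      (hT' ▸ hpos')
    exact ⟨w, hw, hnodup, fun s hs => by linarith [hnonneg s hs]⟩
termination_by S.card
decreasing_by
  · exact card_image_le.trans_lt (card_erase_lt_of_mem hb)
  · exact card_erase_lt_of_mem hb

theorem exists_isOrderingOf_nodup_partialSums (S : Finset ℤ) (h0 : (0 : ℤ) ∉ S)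
    (hsum : ∑ x ∈ S, x ≠ 0) : ∃ l, IsOrderingOf l S ∧ l.partialSums.Nodup := by
  rcases hsum.lt_or_gt with hneg | hpos
  · obtain ⟨u, hu, hnodup, -⟩ := exists_isOrderingOf_partialSums_nonneg (S.image Neg.neg)
      (by simpa using h0)
      (by rw [sum_image (fun x _ y _ h => neg_injective h), sum_neg_distrib]; linarith)
    exact ⟨u.map Neg.neg, hu.map_neg, List.partialSums_map_neg u ▸ hnodup.map neg_injective⟩
  · obtain ⟨l, hl, hnodup, -⟩ := exists_isOrderingOf_partialSums_nonneg S h0 hpos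
    exact ⟨l, hl, hnodup⟩

theorem exists_isOrderingOf_validOrdering_int (S : Finset ℤ) (h0 : (0 : ℤ) ∉ S) :
    ∃ l, IsOrderingOf l S ∧ ValidOrdering l := by
  set T := ∑ y ∈ S, y
  by_cases hS : ∃ x ∈ S, x ≠ T
  · obtain ⟨x, hx, hxT⟩ := hS
    obtain ⟨l, hl, hnodup⟩ := exists_isOrderingOf_nodup_partialSums (S.erase x)
      (fun h => h0 (mem_of_mem_erase h))
      (by rw [sum_erase_eq_sub hx]; exact sub_ne_zero.2 hxT.symm)
    exact ⟨x :: l, hl.cons hx, (validOrdering_cons_iff x l).2 hnodup⟩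
  · push Not at hS
    obtain hS | hS := subset_singleton_iff.1 fun x hx => mem_singleton.2 (hS x hx)
    · exact ⟨[], ⟨List.nodup_nil, by simp [hS]⟩, by simp [ValidOrdering]⟩
    · exact ⟨[T], ⟨List.nodup_singleton T, by simp [hS]⟩, by simp [ValidOrdering]⟩

end Integers

section Reduction

open Finset

theorem abs_sub_le_sum_abs_of_mem_partialSums {G : Type*} [AddCommGroup G] [LinearOrder G]
    [IsOrderedAddMonoid G] (l : List G) {x y : G} (hx : x ∈ l.partialSums)
    (hy : y ∈ l.partialSums) : |x - y| ≤ (l.map abs).sum := by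
  induction l generalizing x y with
  | nil => simp_all
  | cons a t ih =>
    have h0 : (0 : G) ∈ t.partialSums := by cases t <;> simp [List.partialSums_cons]
    have hshift : ∀ s ∈ t.partialSums, |a + s| ≤ |a| + (t.map abs).sum := fun s hs =>
      (abs_add_le a s).trans (by gcongr; simpa using ih hs h0)
    simp only [List.partialSums_cons, List.mem_cons, List.mem_map] at hx hy
    simp only [List.map_cons, List.sum_cons]
    rcases hx with rfl | ⟨x, hx, rfl⟩ <;> rcases hy with rfl | ⟨y, hy, rfl⟩
    · simp [add_nonneg, List.sum_nonneg]
    · rw [zero_sub, abs_neg]; exact hshift y hy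
    · simpa using hshift x hx
    · simpa using (ih hx hy).trans (le_add_of_nonneg_left (abs_nonneg a))

theorem mul_abs_sub_lt_of_div_eq {x y m p : ℕ} (hp : 0 < p) (h : x * m / p = y * m / p) :
    (m : ℤ) * |(x : ℤ) - y| < p := by
  have hx := Nat.div_add_mod (x * m) p
  have hy := Nat.div_add_mod (y * m) p
  have hxp := Nat.mod_lt (x * m) hp
  have hyp := Nat.mod_lt (y * m) hp
  rw [h] at hx
  generalize x * m % p = r at *
  generalize y * m % p = s at *
  rw [← abs_of_nonneg (Nat.cast_nonneg m : (0 : ℤ) ≤ m), ← abs_mul, abs_lt]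
  have hr : (0 : ℤ) ≤ r := r.cast_nonneg
  have hs : (0 : ℤ) ≤ s := s.cast_nonneg
  constructor <;> zify at * <;> linarith

theorem exists_mul_eq_intCast_of_pow_card_lt {p m : ℕ} (A : Finset (ZMod p)) (hm : 0 < m)
    (hp : m ^ A.card < p) :
    ∃ c : ZMod p, c ≠ 0 ∧
      ∃ d : ZMod p → ℤ, ∀ a ∈ A, (d a : ZMod p) = c * a ∧ m * |d a| < p := by
  have hp0 : 0 < p := (Nat.zero_le _).trans_lt hp
  have : NeZero p := ⟨hp0.ne'⟩
  -- Dirichlet's box principle: `t ↦ (⌊m · (t a) / p⌋)_{a ∈ A}` takes only `m ^ |A|` values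
  let box : ℕ → A → Fin m := fun t a =>
    ⟨((t : ZMod p) * a).val * m / p, Nat.div_lt_of_lt_mul <|
      Nat.mul_lt_mul_of_pos_right (ZMod.val_lt ((t : ZMod p) * a.1)) hm⟩
  have hcard : (univ : Finset (A → Fin m)).card < (range (m ^ A.card + 1)).card := by simp
  obtain ⟨t₁, ht₁, t₂, ht₂, hne, hbox⟩ :=
    exists_ne_map_eq_of_card_lt_of_maps_to hcard (f := box) fun t _ => mem_coe.2 (mem_univ _)
  wlog hlt : t₂ < t₁ generalizing t₁ t₂
  · exact this t₂ ht₂ t₁ ht₁ hne.symm hbox.symm (hne.lt_or_gt.resolve_right hlt)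
  refine ⟨((t₁ - t₂ : ℕ) : ZMod p), ?_,
    fun a => ((t₁ * a : ZMod p).val : ℤ) - (t₂ * a : ZMod p).val, fun a ha => ⟨?_, ?_⟩⟩
  · rw [Ne, ZMod.natCast_eq_zero_iff]
    intro hdvd
    have := Nat.le_of_dvd (by omega) hdvd
    simp only [mem_range] at ht₁
    omega
  · push_cast [Nat.cast_sub hlt.le]
    simp [sub_mul]
  · exact mul_abs_sub_lt_of_div_eq hp0 (congrArg Fin.val (congrFun hbox ⟨a, ha⟩))

theorem exists_isOrderingOf_validOrdering_of_pow_card_lt {p : ℕ} [Fact p.Prime]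
    (A : Finset (ZMod p)) (h0 : (0 : ZMod p) ∉ A) (hA : A.card ^ A.card < p) :
    ∃ l, IsOrderingOf l A ∧ ValidOrdering l := by
  rcases A.eq_empty_or_nonempty with rfl | hne
  · exact ⟨[], ⟨List.nodup_nil, by simp⟩, by simp [ValidOrdering]⟩
  obtain ⟨c, hc, d, hd⟩ := exists_mul_eq_intCast_of_pow_card_lt A (card_pos.2 hne) hA
  let f : ℤ →+ ZMod p := (AddMonoidHom.mulLeft c⁻¹).comp (Int.castAddHom (ZMod p))
  have hfd : ∀ a ∈ A, f (d a) = a := fun a ha => by simp [f, (hd a ha).1, hc]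
  have hdinj : Set.InjOn d A := fun a ha b hb h => by rw [← hfd a ha, ← hfd b hb, h]
  have h0' : (0 : ℤ) ∉ A.image d := by
    simp only [mem_image, not_exists, not_and]
    intro a ha hda
    rw [← hfd a ha, hda, map_zero] at ha
    exact h0 ha
  obtain ⟨L, hL, hvalid⟩ := exists_isOrderingOf_validOrdering_int (A.image d) h0'
  -- the lifts have total size `∑ |d a| < p`, so partial sums of `L` differ by less than `p`
  have hsmall : (L.map abs).sum < p := by
    rw [hL.sum_map, sum_image hdinj]
    refine lt_of_mul_lt_mul_left ?_ (Nat.cast_nonneg A.card : (0 : ℤ) ≤ A.card)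
    calc (A.card : ℤ) * ∑ a ∈ A, |d a| = ∑ a ∈ A, (A.card : ℤ) * |d a| := mul_sum _ _ _
      _ < ∑ _a ∈ A, (p : ℤ) := sum_lt_sum_of_nonempty hne fun a ha => (hd a ha).2
      _ = A.card * p := by simp
  have hfinj : Set.InjOn f {s | s ∈ L.partialSums} := by
    intro x hx y hy hxy
    have hcast : (x : ZMod p) = y := mul_left_cancel₀ (inv_ne_zero hc) hxy
    rw [ZMod.intCast_eq_intCast_iff_dvd_sub] at hcast
    have := Int.eq_zero_of_abs_lt_dvd hcast
      ((abs_sub_le_sum_abs_of_mem_partialSums L hy hx).trans_lt hsmall)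
    linarith
  refine ⟨L.map f, ?_, hvalid.map_of_injOn f hfinj⟩
  have himage : (A.image d).image f = A := by
    rw [image_image]
    exact (image_congr (g := id) fun a ha => hfd a ha).trans image_id
  have hfinjB : Set.InjOn f (A.image d) := by
    simp only [Set.InjOn, coe_image, Set.forall_mem_image]
    intro a ha b hb h
    rw [hfd a ha, hfd b hb] at h
    rw [h]
  exact himage ▸ hL.map hfinjB

end Reduction

theorem pow_self_lt_of_le_log_div_log_log {p k : ℕ} (hp : p.Prime) (hk : 5 ≤ k) (hkp : k < p)
    (h : (k : ℝ) ≤ Real.log p / Real.log (Real.log p)) : k ^ k < p := by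
  set x := Real.log p
  have hx : 1.3862 < x := by
    have h4 : Real.log 4 ≤ x :=
      Real.log_le_log (by norm_num) (by exact_mod_cast (by omega : 4 ≤ p))
    rw [show (4 : ℝ) = 2 ^ 2 by norm_num, Real.log_pow, Nat.cast_ofNat] at h4
    linarith [Real.log_two_gt_d9]
  have hy : 0 < Real.log x := Real.log_pos (by linarith)
  have hky : k * Real.log x ≤ x := (le_div_iff₀ hy).1 h
  have hk5 : (5 : ℝ) ≤ k := by exact_mod_cast hk
  refine lt_of_le_of_ne ?_ fun hkk => by have := (hp.pow_eq_iff.1 hkk).2; omega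
  by_cases hy1 : 1 ≤ Real.log x
  · have hkx : (k : ℝ) ≤ x := by nlinarith
    have hlog : Real.log ((k : ℝ) ^ k) ≤ Real.log p := by
      rw [Real.log_pow]
      calc k * Real.log k ≤ k * Real.log x := by gcongr
        _ ≤ x := hky
    exact_mod_cast (Real.log_le_log_iff (by positivity) (by exact_mod_cast hp.pos)).1 hlog
  · -- for `log log p < 1`, `x / log x ≤ x ^ 2 / (x - 1) < 5` on the range `log 4 < x < e`
    have hxe : x < 2.7182818286 := by
      have := (Real.log_lt_iff_lt_exp (by linarith)).1 (not_le.1 hy1)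
      linarith [Real.exp_one_lt_d9]
    have hlog := Real.one_sub_inv_le_log_of_pos (by linarith : 0 < x)
    have hinv : x * x⁻¹ = 1 := mul_inv_cancel₀ (by linarith)
    nlinarith [mul_pos (by linarith : (0 : ℝ) < x - 1.3862) (by linarith : 0 < 2.7182818286 - x)]

theorem graham_small_sets (p : ℕ) (hp : p.Prime) (A : Finset (ZMod p)) (hA : (0 : ZMod p) ∉ A)
    (hsize : (A.card : ℝ) ≤ Real.log p / Real.log (Real.log p)) :
    ∃ l : List (ZMod p), IsOrderingOf l A ∧ ValidOrdering l := by
  by_cases hsmall : A.card ≤ 4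
  · exact exists_isOrderingOf_validOrdering_of_card_le_four A hA hsmall
  have : Fact p.Prime := ⟨hp⟩
  have hcard : A.card < p := by simpa using Finset.card_lt_univ_of_notMem hA
  exact exists_isOrderingOf_validOrdering_of_pow_card_lt A hA
    (pow_self_lt_of_le_log_div_log_log hp (by omega) hcard hsize)
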